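/- arXiv:1910.01908 — 2 statements merged into one kernel-verified Lean document; each statement's English description precedes it below -/
import Mathlib

section
/- For any positive integer t, the polynomial x^{2t} - 2^t over ℚ factors as the product over all divisors d of t of the polynomials Θ_d(x), where Θ_d(x) = 2^{φ(d)} Φ_d(x²/2) and Φ_d is the d-th cyclotomic polynomial. -/
open Polynomial in
/-- `Θ_d(x) = 2^{φ(d)} Φ_d(x²/2)`. -/
noncomputable def Theta (d : ℕ) : ℚ[X] :=
  (2 : ℚ) ^ d.totient • (cyclotomic d ℚ).comp (C (2⁻¹) * X ^ 2)

namespace Polynomial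

theorem prod_smul_cyclotomic_comp {R : Type*} [CommRing R] {t : ℕ} (ht : 0 < t) (c : R)
    (q : R[X]) :
    ∏ d ∈ t.divisors, c ^ d.totient • (cyclotomic d R).comp q =
      c ^ t • (X ^ t - 1 : R[X]).comp q := by
  simp only [smul_eq_C_mul]
  rw [Finset.prod_mul_distrib, ← prod_comp, prod_cyclotomic_eq_X_pow_sub_one ht,
    ← map_prod, Finset.prod_pow_eq_pow_sum, Nat.sum_totient]

theorem pow_smul_X_pow_sub_one_comp {K : Type*} [Field K] {c : K} (hc : c ≠ 0) (t : ℕ) :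
    c ^ t • (X ^ t - 1 : K[X]).comp (C c⁻¹ * X ^ 2) = X ^ (2 * t) - C (c ^ t) := by
  rw [sub_comp, pow_comp, X_comp, one_comp, mul_pow, ← C_pow, smul_sub, smul_eq_C_mul,
    smul_eq_C_mul, ← mul_assoc, ← C_mul, ← mul_pow, mul_inv_cancel₀ hc, one_pow, C_1, one_mul,
    ← pow_mul, mul_one]

end Polynomial

open Polynomial in
theorem stmt_9 (t : ℕ) (ht : 0 < t) :
    (X ^ (2 * t) - C ((2 : ℚ) ^ t)) = ∏ d ∈ t.divisors, Theta d := by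
  rw [← pow_smul_X_pow_sub_one_comp two_ne_zero, ← prod_smul_cyclotomic_comp ht]
  rfl
end

section
/- Let e ≥ 5 be an odd integer and consider the projective plane curve X' over an algebraically closed field of characteristic 2 defined by a homogeneous degree-e polynomial Q(x,y,z) = P̄(x,z) + y z^{e-1} + y² z^{e-2}, where P̄(x,z) is a homogeneous degree-e polynomial in x, z containing the monomial x^e and only even powers of z. Then the singular locus of X' is exactly the single point [0:1:0]. -/
/-!
In characteristic 2 the `y`-derivative of `Q` is `z^(e-1)`, since `P̄` does not involve `y` and
`∂(y²)/∂y = 2y = 0`. So a singular point has `z = 0`, and then `Q = x^e` forces `x = 0`.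
Conversely `Q` lies in `I²` for the ideal `I = (x, z)` of the point `[0:1:0]` (every monomial has
total degree at least 2 in `x, z`), and by the Leibniz rule all partial derivatives of an element
of `I²` vanish on the zero set of `I`.
-/

open MvPolynomial

section

variable {σ R : Type*} [CommRing R]

theorem eval_pderiv_eq_zero_of_mem_ker_eval_sq {p : σ → R} {f : MvPolynomial σ R}
    (hf : f ∈ RingHom.ker (eval p) ^ 2) (i : σ) : eval p (pderiv i f) = 0 := by
  rw [sq] at hf
  induction hf using Submodule.mul_induction_on' with
  | mem_mul_mem a ha b hb =>
    rw [RingHom.mem_ker] at ha hb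
    simp [ha, hb]
  | add f _ g _ hf hg => simp [hf, hg]

theorem pow_mem_ker_eval_sq {p : σ → R} {f : MvPolynomial σ R} (hf : eval p f = 0)
    {n : ℕ} (hn : 2 ≤ n) : f ^ n ∈ RingHom.ker (eval p) ^ 2 :=
  Ideal.pow_le_pow_right hn (Ideal.pow_mem_pow hf n)

end

section

variable {K : Type*} [CommRing K] (e : ℕ) (c : ℕ → K)

/-- The part of `P̄` other than `x^e`, with `x, y, z` the variables `X 0, X 1, X 2`. -/
noncomputable def evenPart : MvPolynomial (Fin 3) K :=
  ∑ j ∈ Finset.Icc 1 ((e - 1) / 2), C (c j) * X 0 ^ (e - 2 * j) * X 2 ^ (2 * j)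

theorem evenPart_mem_ker_eval_sq {p : Fin 3 → K} (hp : p 2 = 0) :
    evenPart e c ∈ RingHom.ker (eval p) ^ 2 :=
  Ideal.sum_mem _ fun j hj => Ideal.mul_mem_left _ _ <|
    pow_mem_ker_eval_sq (by simpa using hp) (by simp at hj; omega)

theorem eval_evenPart {p : Fin 3 → K} (hp : p 2 = 0) : eval p (evenPart e c) = 0 :=
  Ideal.pow_le_self two_ne_zero (evenPart_mem_ker_eval_sq e c hp)

noncomputable def curvePoly : MvPolynomial (Fin 3) K :=
  X 0 ^ e + evenPart e c + X 1 * X 2 ^ (e - 1) + X 1 ^ 2 * X 2 ^ (e - 2)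

theorem curvePoly_mem_ker_eval_sq {p : Fin 3 → K} (hp0 : p 0 = 0) (hp2 : p 2 = 0) (he : 4 ≤ e) :
    curvePoly e c ∈ RingHom.ker (eval p) ^ 2 := by
  have hx : eval p (X 0) = 0 := by simpa using hp0
  have hz : eval p (X 2) = 0 := by simpa using hp2
  refine add_mem (add_mem (add_mem ?_ (evenPart_mem_ker_eval_sq e c hp2)) ?_) ?_
  · exact pow_mem_ker_eval_sq hx (by omega)
  · exact Ideal.mul_mem_left _ _ (pow_mem_ker_eval_sq hz (by omega))
  · exact Ideal.mul_mem_left _ _ (pow_mem_ker_eval_sq hz (by omega))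

theorem eval_curvePoly_of_apply_two_eq_zero {p : Fin 3 → K} (hp2 : p 2 = 0) (he : 3 ≤ e) :
    eval p (curvePoly e c) = p 0 ^ e := by
  simp [curvePoly, eval_evenPart e c hp2, hp2, zero_pow (by omega : e - 1 ≠ 0),
    zero_pow (by omega : e - 2 ≠ 0)]

theorem eval_pderiv_one_curvePoly [CharP K 2] (p : Fin 3 → K) :
    eval p (pderiv 1 (curvePoly e c)) = p 2 ^ (e - 1) := by
  simp [curvePoly, evenPart, CharTwo.two_eq_zero]

end

open MvPolynomial in
theorem stmt_19_general (K : Type*) [Field K] [CharP K 2]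
    (e : ℕ) (he : 5 ≤ e) (c : ℕ → K)
    (Pbar : MvPolynomial (Fin 3) K)
    (hPbar : Pbar = X 0 ^ e +
      ∑ j ∈ Finset.Icc 1 ((e - 1) / 2), C (c j) * X 0 ^ (e - 2 * j) * X 2 ^ (2 * j))
    (Q : MvPolynomial (Fin 3) K)
    (hQ : Q = Pbar + X 1 * X 2 ^ (e - 1) + X 1 ^ 2 * X 2 ^ (e - 2)) :
    eval ![0, 1, 0] Q = 0 ∧
    ∀ p : Fin 3 → K, p ≠ 0 → eval p Q = 0 →
      ((∀ i, eval p (pderiv i Q) = 0) ↔ (p 0 = 0 ∧ p 2 = 0)) := by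
  obtain rfl : Q = curvePoly e c := by rw [hQ, hPbar]; rfl
  refine ⟨Ideal.pow_le_self two_ne_zero (curvePoly_mem_ker_eval_sq e c rfl rfl (by omega)),
    fun p _ hQp => ⟨fun hsing => ?_, fun ⟨hp0, hp2⟩ =>
      eval_pderiv_eq_zero_of_mem_ker_eval_sq (curvePoly_mem_ker_eval_sq e c hp0 hp2 (by omega))⟩⟩
  have hp2 : p 2 = 0 := by
    have hz := hsing 1
    rw [eval_pderiv_one_curvePoly] at hz
    exact pow_eq_zero_iff (by omega) |>.mp hz
  rw [eval_curvePoly_of_apply_two_eq_zero e c hp2 (by omega)] at hQp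
  exact ⟨pow_eq_zero_iff (by omega) |>.mp hQp, hp2⟩

open MvPolynomial in
theorem stmt_19 (K : Type*) [Field K] [IsAlgClosed K] [CharP K 2]
    (e : ℕ) (he : 5 ≤ e) (hodd : Odd e) (c : ℕ → K)
    (Pbar : MvPolynomial (Fin 3) K)
    (hPbar : Pbar = X 0 ^ e +
      ∑ j ∈ Finset.Icc 1 ((e - 1) / 2), C (c j) * X 0 ^ (e - 2 * j) * X 2 ^ (2 * j))
    (Q : MvPolynomial (Fin 3) K)
    (hQ : Q = Pbar + X 1 * X 2 ^ (e - 1) + X 1 ^ 2 * X 2 ^ (e - 2)) :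
    eval ![0, 1, 0] Q = 0 ∧
    ∀ p : Fin 3 → K, p ≠ 0 → eval p Q = 0 →
      ((∀ i, eval p (pderiv i Q) = 0) ↔ (p 0 = 0 ∧ p 2 = 0)) :=
  stmt_19_general K e he c Pbar hPbar Q hQ
end
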